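/- Let d ≥ 3 and let z_1, …, z_d ∈ ℝ^d be linearly independent vectors such that z̲_1, …, z̲_{d−1} are linearly independent and z̲_2, …, z̲_d are linearly independent in ℝ^{d−1} (so that α_1 and α_2 are well defined). Then |α_1 − α_2| = ( det Λ̲_{2,d−2} · |det(z_1, …, z_d)| ) / ( det Λ̲_{1,d−1} · det Λ̲_{2,d−1} ), where for d = 3 one reads det Λ̲_{2,d−2} = det Λ̲_{2,1} = |z̲_2|. -/

import Mathlib

open scoped InnerProductSpace

noncomputable section

/-- `ℝ^n` with the Euclidean structure. -/
abbrev E (n : ℕ) : Type := EuclideanSpace ℝ (Fin n)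

/-- The projection `x ↦ x̲` forgetting the last coordinate. -/
def pr (d : ℕ) (x : E d) : E (d - 1) :=
  WithLp.toLp 2 (fun i : Fin (d - 1) => x (Fin.castLE (Nat.sub_le d 1) i))

/-- The canonical embedding of `ℤ^d` into `ℝ^d`. -/
def toE (d : ℕ) (z : Fin d → ℤ) : E d := WithLp.toLp 2 (fun i => (z i : ℝ))

/-- The `m`-dimensional volume of the parallelepiped spanned by `v 0, …, v (m-1)`
(square root of the Gram determinant). -/
def gramVol {n m : ℕ} (v : Fin m → E n) : ℝ :=
  Real.sqrt ((Matrix.of (fun i j : Fin m => ⟪v i, v j⟫_ℝ)).det)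

/-- `z` is a best approximation vector for the linear form `L_α : x ↦ ⟪α, x⟫`. -/
def IsBestApprox (d : ℕ) (α : E d) (z : Fin d → ℤ) : Prop :=
  pr d (toE d z) ≠ 0 ∧
  ∀ z' : Fin d → ℤ, pr d (toE d z') ≠ 0 →
    (‖pr d (toE d z')‖ ≤ ‖pr d (toE d z)‖ → |⟪α, toE d z⟫_ℝ| ≤ |⟪α, toE d z'⟫_ℝ|) ∧
    (‖pr d (toE d z')‖ < ‖pr d (toE d z)‖ → |⟪α, toE d z⟫_ℝ| < |⟪α, toE d z'⟫_ℝ|)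

/-- `det Λ̲_{k,l}` for a sequence of integer vectors: the `l`-dimensional volume of the
parallelepiped spanned by `z̲_k, …, z̲_{k+l-1}`. -/
def detL (d : ℕ) (z : ℕ → Fin d → ℤ) (k l : ℕ) : ℝ :=
  gramVol (fun i : Fin l => pr d (toE d (z (k + i.1))))

/-- `D_{k,l} = det Λ̲_{k,l} / |z̲_k|^l`. -/
def Dq (d : ℕ) (z : ℕ → Fin d → ℤ) (k l : ℕ) : ℝ :=
  detL d z k l / ‖pr d (toE d (z k))‖ ^ l

/-- `B_k = |z̲_{k+1}| / |z̲_k|`. -/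
def Bq (d : ℕ) (z : ℕ → Fin d → ℤ) (k : ℕ) : ℝ :=
  ‖pr d (toE d (z (k + 1)))‖ / ‖pr d (toE d (z k))‖

/-- `R_k = 1 / (2 |z̲_{k+1}| det Λ̲_{k,d-1})`. -/
def Rq (d : ℕ) (z : ℕ → Fin d → ℤ) (k : ℕ) : ℝ :=
  1 / (2 * ‖pr d (toE d (z (k + 1)))‖ * detL d z k (d - 1))

/-- `v 0, …, v (d-1)` form a basis of the lattice `ℤ^d`. -/
def IsZBasis (d : ℕ) (v : Fin d → Fin d → ℤ) : Prop :=
  IsUnit ((Matrix.of (fun i j : Fin d => v j i)).det)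

/-- `det Λ̲_{k,l}` for a sequence of real vectors. -/
def detLR (d : ℕ) (z : ℕ → E d) (k l : ℕ) : ℝ :=
  gramVol (fun i : Fin l => pr d (z (k + i.1)))

/-!
The difference `δ = α₁ - α₂` has last coordinate `0`, so `‖δ‖ = ‖δ̲‖` and `⟪δ, x⟫ = ⟪δ̲, x̲⟫`;
in particular `δ̲ ⊥ z̲₂, …, z̲_{d-1}` and `⟪δ̲, z̲₁⟫ = -⟪α₂, z₁⟫`. In a `(k+1)`-dimensional space,
if `u ⊥ c₁, …, c_k` then every alternating form `x ↦ f(x, c)` is proportional to `⟪u, x⟫`.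
With `u = δ̲` in `ℝ^{d-1}` this gives `‖δ‖ · det Λ̲_{1,d-1} = |⟪α₂, z₁⟫| · det Λ̲_{2,d-2}`. With
`u = α₂` in `ℝ^d`, comparing `x = z₁` with `x = e_d` (where `⟪α₂, e_d⟫ = 1` and the determinant is
`± det Λ̲_{2,d-1}`) gives `|det(z₁, …, z_d)| = |⟪α₂, z₁⟫| · det Λ̲_{2,d-1}`. Eliminating `⟪α₂, z₁⟫`
yields the formula.
-/

open Module

theorem AlternatingMap.inner_mul_apply_cons_comm {V : Type*} [NormedAddCommGroup V]
    [InnerProductSpace ℝ V] [FiniteDimensional ℝ V] {k : ℕ} (hV : finrank ℝ V = k + 1)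
    (f : V [⋀^Fin (k + 1)]→ₗ[ℝ] ℝ) {u : V} {c : Fin k → V} (hu : ∀ i, ⟪u, c i⟫_ℝ = 0)
    (x y : V) : ⟪u, y⟫_ℝ * f (Fin.cons x c) = ⟪u, x⟫_ℝ * f (Fin.cons y c) := by
  by_cases hc : LinearIndependent ℝ c
  swap
  · have hdep : ∀ v, ¬LinearIndependent ℝ (Fin.cons v c : Fin (k + 1) → V) := fun v h =>
      hc (linearIndependent_finCons.1 h).1
    simp [f.map_linearDependent _ (hdep x), f.map_linearDependent _ (hdep y)]
  rcases eq_or_ne u 0 with rfl | hu0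
  · simp
  have hspan : Submodule.span ℝ (Set.range c) = (ℝ ∙ u)ᗮ := by
    refine Submodule.eq_of_le_of_finrank_le ?_ ?_
    · rw [Submodule.span_le]
      rintro _ ⟨i, rfl⟩
      exact Submodule.mem_orthogonal_singleton_iff_inner_right.2 (hu i)
    · have := Submodule.finrank_add_finrank_orthogonal (ℝ ∙ u)
      rw [finrank_span_singleton hu0, hV] at this
      rw [finrank_span_eq_card hc, Fintype.card_fin]
      omega
  have hw : ⟪u, y⟫_ℝ • x - ⟪u, x⟫_ℝ • y ∈ Submodule.span ℝ (Set.range c) := by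
    rw [hspan, Submodule.mem_orthogonal_singleton_iff_inner_right, inner_sub_right,
      real_inner_smul_right, real_inner_smul_right]
    ring
  have hzero : f (Fin.cons (⟪u, y⟫_ℝ • x - ⟪u, x⟫_ℝ • y) c) = 0 :=
    f.map_linearDependent _ fun h => (linearIndependent_finCons.1 h).2 hw
  have hadd := f.toMultilinearMap.cons_add c (⟪u, y⟫_ℝ • x) (-⟪u, x⟫_ℝ • y)
  have hx := f.toMultilinearMap.cons_smul c ⟪u, y⟫_ℝ x
  have hy := f.toMultilinearMap.cons_smul c (-⟪u, x⟫_ℝ) y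
  simp only [AlternatingMap.coe_multilinearMap, neg_smul, ← sub_eq_add_neg, smul_eq_mul]
    at hadd hx hy
  rw [hadd, hx, hy] at hzero
  linarith

def euclideanDet (n : ℕ) : E n [⋀^Fin n]→ₗ[ℝ] ℝ := (EuclideanSpace.basisFun (Fin n) ℝ).toBasis.det

theorem euclideanDet_apply {n : ℕ} (v : Fin n → E n) :
    euclideanDet n v = (Matrix.of fun i j => v j i).det := by
  rw [euclideanDet, Basis.det_apply]
  rfl

theorem gramVol_eq_abs_euclideanDet {n : ℕ} (v : Fin n → E n) : gramVol v = |euclideanDet n v| := by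
  rw [gramVol, ← Matrix.gram, Matrix.gram_eq_conjTranspose_mul (EuclideanSpace.basisFun (Fin n) ℝ),
    Matrix.det_mul, Matrix.det_conjTranspose, euclideanDet_apply]
  exact Real.sqrt_mul_self_eq_abs _

theorem gramVol_pos {n m : ℕ} {v : Fin m → E n} (hv : LinearIndependent ℝ v) : 0 < gramVol v :=
  Real.sqrt_pos.2 <| lt_of_le_of_ne (Matrix.posSemidef_gram ℝ v).det_nonneg
    (Matrix.det_gram_ne_zero_iff_linearIndependent.2 hv).symm

theorem gramVol_cons_of_inner_eq_zero {n k : ℕ} {w : E n} {c : Fin k → E n}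
    (hw : ∀ i, ⟪w, c i⟫_ℝ = 0) : gramVol (Fin.cons w c : Fin (k + 1) → E n) = ‖w‖ * gramVol c := by
  rw [gramVol, gramVol, Matrix.det_succ_row_zero, Fin.sum_univ_succ]
  simp [hw]
  left
  rfl

theorem inner_eq_inner_pr_add {n : ℕ} (x y : E (n + 1)) :
    ⟪x, y⟫_ℝ = ⟪pr (n + 1) x, pr (n + 1) y⟫_ℝ + x (Fin.last n) * y (Fin.last n) := by
  simp only [PiLp.inner_apply, RCLike.inner_apply, starRingEnd_apply, star_trivial, pr,
    Fin.sum_univ_castSucc]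
  exact congrArg₂ (· + ·) rfl (mul_comm _ _)

theorem euclideanDet_cons_single_last {n : ℕ} (v : Fin n → E (n + 1)) :
    euclideanDet (n + 1) (Fin.cons (EuclideanSpace.single (Fin.last n) 1) v) =
      (-1) ^ n * euclideanDet n (fun j => pr (n + 1) (v j)) := by
  rw [euclideanDet_apply, euclideanDet_apply, Matrix.det_succ_column_zero,
    Finset.sum_eq_single (Fin.last n)]
  · simp
    rfl
  · intro i _ hi
    simp [hi]
  · simp

theorem abs_euclideanDet_cons_of_apply_last_eq_one {n : ℕ} {α : E (n + 1)}
    (hα : α (Fin.last n) = 1) {v : Fin n → E (n + 1)} (hv : ∀ j, ⟪α, v j⟫_ℝ = 0) (x : E (n + 1)) :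
    |euclideanDet (n + 1) (Fin.cons x v)| =
      |⟪α, x⟫_ℝ| * |euclideanDet n fun j => pr (n + 1) (v j)| := by
  have key := (euclideanDet (n + 1)).inner_mul_apply_cons_comm (finrank_euclideanSpace_fin) hv x
    (EuclideanSpace.single (Fin.last n) 1)
  rw [EuclideanSpace.inner_single_right, hα, euclideanDet_cons_single_last] at key
  simp only [map_one, one_mul] at key
  rw [key, abs_mul, abs_mul, abs_pow, abs_neg, abs_one, one_pow, one_mul]

theorem norm_mul_abs_euclideanDet_cons {k : ℕ} {w : E (k + 1)} {c : Fin k → E (k + 1)}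
    (hw : ∀ i, ⟪w, c i⟫_ℝ = 0) (x : E (k + 1)) :
    ‖w‖ * |euclideanDet (k + 1) (Fin.cons x c)| = |⟪w, x⟫_ℝ| * gramVol c := by
  rcases eq_or_ne w 0 with rfl | hw0
  · simp
  have key := (euclideanDet (k + 1)).inner_mul_apply_cons_comm (finrank_euclideanSpace_fin) hw x w
  rw [real_inner_self_eq_norm_sq] at key
  have hcons : |euclideanDet (k + 1) (Fin.cons w c)| = ‖w‖ * gramVol c := by
    rw [← gramVol_eq_abs_euclideanDet, gramVol_cons_of_inner_eq_zero hw]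
  have := congrArg abs key
  rw [abs_mul, abs_mul, hcons, abs_of_nonneg (sq_nonneg _)] at this
  refine mul_left_cancel₀ (norm_ne_zero_iff.2 hw0) ?_
  linear_combination this

theorem inner_pr_of_apply_last_eq_zero {n : ℕ} {x : E (n + 1)} (hx : x (Fin.last n) = 0)
    (y : E (n + 1)) : ⟪pr (n + 1) x, pr (n + 1) y⟫_ℝ = ⟪x, y⟫_ℝ := by
  rw [inner_eq_inner_pr_add, hx, zero_mul, add_zero]

theorem norm_pr_of_apply_last_eq_zero {n : ℕ} {x : E (n + 1)} (hx : x (Fin.last n) = 0) :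
    ‖pr (n + 1) x‖ = ‖x‖ := by
  rw [norm_eq_sqrt_real_inner, norm_eq_sqrt_real_inner, inner_pr_of_apply_last_eq_zero hx]

theorem detLR_eq_gramVol (d : ℕ) (z : ℕ → E d) (k l : ℕ) :
    detLR d z k l = gramVol fun i : Fin l => pr d (z (i.1 + k)) := by
  simp only [detLR, add_comm]

theorem abs_det_eq_abs_inner_mul_detLR {n : ℕ} (z : ℕ → E (n + 1)) {α : E (n + 1)}
    (hα : α (Fin.last n) = 1) (hperp : ∀ i : Fin n, ⟪α, z (i.1 + 2)⟫_ℝ = 0) :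
    |(Matrix.of fun i j : Fin (n + 1) => z (j.1 + 1) i).det| =
      |⟪α, z 1⟫_ℝ| * detLR (n + 1) z 2 n := by
  rw [detLR_eq_gramVol, gramVol_eq_abs_euclideanDet, ← euclideanDet_apply]
  refine (congrArg (|euclideanDet (n + 1) ·|) ?_).trans
    (abs_euclideanDet_cons_of_apply_last_eq_one hα hperp (z 1))
  funext i
  cases i using Fin.cases <;> rfl

theorem norm_mul_detLR_eq {k : ℕ} (z : ℕ → E (k + 2)) {δ : E (k + 2)}
    (hδ : δ (Fin.last (k + 1)) = 0) (hperp : ∀ i : Fin k, ⟪δ, z (i.1 + 2)⟫_ℝ = 0) :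
    ‖δ‖ * detLR (k + 2) z 1 (k + 1) = |⟪δ, z 1⟫_ℝ| * detLR (k + 2) z 2 k := by
  have h := norm_mul_abs_euclideanDet_cons (w := pr (k + 2) δ)
    (c := fun i : Fin k => pr (k + 2) (z (i.1 + 2)))
    (fun i => (inner_pr_of_apply_last_eq_zero hδ _).trans (hperp i)) (pr (k + 2) (z 1))
  rw [inner_pr_of_apply_last_eq_zero hδ, norm_pr_of_apply_last_eq_zero hδ] at h
  rw [detLR_eq_gramVol, detLR_eq_gramVol, gramVol_eq_abs_euclideanDet, ← h]
  congr 3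
  funext i
  cases i using Fin.cases <;> rfl

theorem stmt14 (d : ℕ) (hd : 3 ≤ d) (z : ℕ → E d)
    (hlip1 : LinearIndependent ℝ (fun i : Fin (d - 1) => pr d (z (i.1 + 1))))
    (hlip2 : LinearIndependent ℝ (fun i : Fin (d - 1) => pr d (z (i.1 + 2))))
    (α1 : E d) (hα1pi : α1 ⟨d - 1, by omega⟩ = 1)
    (hα1perp : ∀ i : Fin (d - 1), ⟪α1, z (i.1 + 1)⟫_ℝ = 0)
    (α2 : E d) (hα2pi : α2 ⟨d - 1, by omega⟩ = 1)
    (hα2perp : ∀ i : Fin (d - 1), ⟪α2, z (i.1 + 2)⟫_ℝ = 0) :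
    ‖α1 - α2‖ =
      detLR d z 2 (d - 2) * |(Matrix.of (fun i j : Fin d => z (j.1 + 1) i)).det| /
        (detLR d z 1 (d - 1) * detLR d z 2 (d - 1)) := by
  obtain ⟨k, rfl⟩ : ∃ k, d = k + 2 := ⟨d - 2, by omega⟩
  have hα1 : α1 (Fin.last (k + 1)) = 1 := hα1pi
  have hα2 : α2 (Fin.last (k + 1)) = 1 := hα2pi
  have hZ := abs_det_eq_abs_inner_mul_detLR z hα2 hα2perp
  have hW := norm_mul_detLR_eq z (δ := α1 - α2) (by simp [hα1, hα2]) fun i => by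
    rw [inner_sub_left, hα1perp ⟨i + 1, by omega⟩, hα2perp ⟨i, by omega⟩, sub_zero]
  rw [inner_sub_left, (hα1perp ⟨0, by omega⟩ : ⟪α1, z 1⟫_ℝ = 0), zero_sub, abs_neg] at hW
  have hA : 0 < detLR (k + 2) z 1 (k + 1) := by rw [detLR_eq_gramVol]; exact gramVol_pos hlip1
  have hB : 0 < detLR (k + 2) z 2 (k + 1) := by rw [detLR_eq_gramVol]; exact gramVol_pos hlip2
  change ‖α1 - α2‖ =
    detLR (k + 2) z 2 k * _ / (detLR (k + 2) z 1 (k + 1) * detLR (k + 2) z 2 (k + 1))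
  rw [eq_div_iff (by positivity), hZ]
  linear_combination detLR (k + 2) z 2 (k + 1) * hW
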